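/- Let q ≠ 0 and r be real numbers. For every nonnegative integer n, ∑_{k=0}^n W(n,k) c_k^q(r) = 1/(n+1). -/

import Mathlib

/-!
Since `q^k ((x - r)/q)_k = (x - r | q)_k`, substituting `(x - r)/q` for `x` in the defining
identity of the `W(n,k)` gives `x^n = ∑_k W(n,k) (x - r | q)_k`; integrating over `[0,1]`
turns the right side into `∑_k W(n,k) c_k^q(r)` and the left side into `1/(n+1)`.
-/

/-- The falling factorial `(x)_k = x(x-1)⋯(x-k+1)`. -/
noncomputable def fallFac (x : ℝ) (k : ℕ) : ℝ := ∏ i ∈ Finset.range k, (x - i)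

/-- The generalized falling factorial `(x|q)_k = x(x-q)⋯(x-(k-1)q)`. -/
noncomputable def genFallFac (q x : ℝ) (k : ℕ) : ℝ := ∏ i ∈ Finset.range k, (x - i * q)

/-- The Cauchy polynomials with a `q` parameter of the first kind:
`c_n^q(z) = ∫_0^1 (x − z | q)_n dx`. -/
noncomputable def cauchyFirst (q z : ℝ) (n : ℕ) : ℝ := ∫ x in (0:ℝ)..1, genFallFac q (x - z) n

open Finset

lemma genFallFac_eq_pow_mul_fallFac {q : ℝ} (hq : q ≠ 0) (y : ℝ) (k : ℕ) :
    genFallFac q y k = q ^ k * fallFac (y / q) k := by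
  rw [genFallFac, fallFac, ← card_range k, ← prod_const, card_range, ← prod_mul_distrib]
  refine prod_congr rfl fun i _ => ?_
  field_simp

lemma continuous_genFallFac_sub (q z : ℝ) (k : ℕ) :
    Continuous fun x => genFallFac q (x - z) k :=
  continuous_finsetProd _ fun _ _ => by fun_prop

lemma sum_mul_cauchyFirst (q z : ℝ) (c : ℕ → ℝ) (s : Finset ℕ) :
    ∑ k ∈ s, c k * cauchyFirst q z k
      = ∫ x in (0:ℝ)..1, ∑ k ∈ s, c k * genFallFac q (x - z) k := by
  rw [intervalIntegral.integral_finsetSum]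
  · simp only [cauchyFirst, intervalIntegral.integral_const_mul]
  · exact fun k _ => ((continuous_genFallFac_sub q z k).const_mul (c k)).intervalIntegrable 0 1

lemma pow_eq_sum_mul_genFallFac {q r : ℝ} (hq : q ≠ 0) {W : ℕ → ℕ → ℝ} {n : ℕ}
    (hW : ∀ x : ℝ, (q * x + r) ^ n = ∑ k ∈ range (n + 1), q ^ k * W n k * fallFac x k)
    (x : ℝ) :
    x ^ n = ∑ k ∈ range (n + 1), W n k * genFallFac q (x - r) k := by
  have h := hW ((x - r) / q)
  rw [mul_div_cancel₀ _ hq, sub_add_cancel] at h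
  rw [h]
  refine sum_congr rfl fun k _ => ?_
  rw [genFallFac_eq_pow_mul_fallFac hq]
  ring

theorem whitneySecond_mul_cauchyFirst_sum_general (q r : ℝ) (hq : q ≠ 0)
    (W : ℕ → ℕ → ℝ)
    (hW : ∀ n : ℕ, ∀ x : ℝ, (q * x + r) ^ n =
      ∑ k ∈ Finset.range (n + 1), q ^ k * W n k * fallFac x k)
    (n : ℕ) :
    ∑ k ∈ Finset.range (n + 1), W n k * cauchyFirst q r k = 1 / ((n : ℝ) + 1) := by
  rw [sum_mul_cauchyFirst]
  simp_rw [← pow_eq_sum_mul_genFallFac hq (hW n)]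
  simp [integral_pow]

/-- `∑_{k=0}^n W(n,k) c_k^q(r) = 1/(n+1)`. -/
theorem whitneySecond_mul_cauchyFirst_sum (q r : ℝ) (hq : q ≠ 0)
    (W : ℕ → ℕ → ℝ)
    (hW0 : ∀ n k, n < k → W n k = 0)
    (hW : ∀ n : ℕ, ∀ x : ℝ, (q * x + r) ^ n =
      ∑ k ∈ Finset.range (n + 1), q ^ k * W n k * fallFac x k)
    (n : ℕ) :
    ∑ k ∈ Finset.range (n + 1), W n k * cauchyFirst q r k = 1 / ((n : ℝ) + 1) :=
  whitneySecond_mul_cauchyFirst_sum_general q r hq W hW n
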